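/- arXiv:1502.00362 — 7 statements merged into one kernel-verified Lean document; each statement's English description precedes it below -/
import Mathlib

section
/- Let G be a simple graph on a finite vertex set V and let i, j ∈ V be distinct. If f is an (i,j)-feasible flow for G, then i and j are reachable from each other in G, and the value Σ_{k,l∈V} f(k,l) of f is at least dist_G(i,j), the graph distance (length of a shortest path) between i and j in G. -/
/-!
Weak LP duality. If `y : V → ℝ` is a potential with `y l - y k ≤ 1` along every edge, then
`∑ f k l * (y l - y k)` is at most the value of `f`, and by flow conservation it telescopes to
`y j - y i`. The distance potential `k ↦ dist_G(i, k)` gives the bound on the value; if `j` were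
not reachable from `i`, the potential that is `c` off the component of `i` and `0` on it would give
`c ≤ value` for every `c`.
-/

/-- `f : V → V → ℝ` is an `(i,j)`-feasible flow for the simple graph `G`
(a feasible point of the paper's primal shortest-path LP (10)–(14)):
it is nonnegative, vanishes on the diagonal, satisfies the capacity
constraint `f k l + f l k ≤ 1` on edges of `G` and vanishes on non-edges,
and satisfies flow conservation with a unit source at `i` and unit sink
at `j`. -/
def IsFeasibleFlow {V : Type*} [Fintype V] [DecidableEq V]
    (G : SimpleGraph V) (i j : V) (f : V → V → ℝ) : Prop :=
  (∀ k l, 0 ≤ f k l) ∧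
  (∀ k, f k k = 0) ∧
  (∀ k l, G.Adj k l → f k l + f l k ≤ 1) ∧
  (∀ k l, k ≠ l → ¬ G.Adj k l → f k l = 0) ∧
  (∀ k, (∑ l, f k l) - (∑ l, f l k) =
    if k = i then 1 else if k = j then -1 else 0)

open Finset

theorem SimpleGraph.dist_le_dist_add_one_of_adj {V : Type*} {G : SimpleGraph V} (i : V) {k l : V}
    (hadj : G.Adj k l) : G.dist i l ≤ G.dist i k + 1 := by
  simpa [dist_eq_one_iff_adj.mpr hadj] using hadj.reachable.dist_triangle_right i

section

variable {V : Type*} [Fintype V]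

theorem sum_sum_mul_sub_eq_neg_sum_mul (f : V → V → ℝ) (y : V → ℝ) :
    ∑ k, ∑ l, f k l * (y l - y k) = -∑ k, (∑ l, f k l - ∑ l, f l k) * y k := by
  simp only [mul_sub, sum_sub_distrib, sub_mul, sum_mul]
  rw [sum_comm (f := fun k l => f k l * y l)]
  ring

namespace IsFeasibleFlow

variable [DecidableEq V] {G : SimpleGraph V} {i j : V} {f : V → V → ℝ}

theorem mul_sub_le (hf : IsFeasibleFlow G i j f) {y : V → ℝ}
    (hy : ∀ k l, G.Adj k l → y l - y k ≤ 1) (k l : V) : f k l * (y l - y k) ≤ f k l := by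
  obtain ⟨hnn, hdiag, -, hne, -⟩ := hf
  by_cases hadj : G.Adj k l
  · exact mul_le_of_le_one_right (hnn k l) (hy k l hadj)
  · obtain rfl | hkl := eq_or_ne k l
    · simp [hdiag]
    · simp [hne k l hkl hadj]

theorem sum_sum_mul_sub_eq_sub (hf : IsFeasibleFlow G i j f) (hij : i ≠ j) (y : V → ℝ) :
    ∑ k, ∑ l, f k l * (y l - y k) = y j - y i := by
  have hcons : ∀ k, (∑ l, f k l - ∑ l, f l k) * y k =
      (if k = i then y k else 0) - (if k = j then y k else 0) := by
    intro k
    rw [hf.2.2.2.2 k]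
    obtain rfl | hki := eq_or_ne k i
    · simp [hij]
    · obtain rfl | hkj := eq_or_ne k j <;> simp [*]
  simp only [sum_sum_mul_sub_eq_neg_sum_mul, hcons, sum_sub_distrib, sum_ite_eq', mem_univ, if_true]
  ring

theorem sub_le_sum_sum (hf : IsFeasibleFlow G i j f) (hij : i ≠ j) {y : V → ℝ}
    (hy : ∀ k l, G.Adj k l → y l - y k ≤ 1) : y j - y i ≤ ∑ k, ∑ l, f k l := by
  rw [← hf.sum_sum_mul_sub_eq_sub hij y]
  exact sum_le_sum fun k _ => sum_le_sum fun l _ => hf.mul_sub_le hy k l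

theorem reachable (hf : IsFeasibleFlow G i j f) (hij : i ≠ j) : G.Reachable i j := by
  classical
  by_contra hnr
  have hcomp : ∀ k l, G.Adj k l → (G.Reachable i k ↔ G.Reachable i l) := fun k l hadj =>
    ⟨fun h => h.trans hadj.reachable, fun h => h.trans hadj.symm.reachable⟩
  have key := hf.sub_le_sum_sum hij
    (y := fun v => if G.Reachable i v then 0 else ∑ k, ∑ l, f k l + 1)
    fun k l hadj => by simp [hcomp k l hadj]
  simp only [SimpleGraph.Reachable.refl, if_true, hnr, if_false, sub_zero] at key
  linarith

end IsFeasibleFlow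

end

/-- **Lower-bound half of the correctness of the primal shortest-path LP.**
If `f` is an `(i,j)`-feasible flow for `G` (with `i ≠ j`), then `i` and `j`
are reachable from each other in `G` and the value `∑_{k,l} f k l` of the
flow is at least the graph distance `dist_G(i,j)`. -/
theorem feasibleFlow_value_ge_dist {V : Type*} [Fintype V] [DecidableEq V]
    (G : SimpleGraph V) (i j : V) (hij : i ≠ j) (f : V → V → ℝ)
    (hf : IsFeasibleFlow G i j f) :
    G.Reachable i j ∧ (G.dist i j : ℝ) ≤ ∑ k, ∑ l, f k l := by
  refine ⟨hf.reachable hij, ?_⟩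
  have key := hf.sub_le_sum_sum hij (y := fun k => (G.dist i k : ℝ)) fun k l hadj =>
    sub_le_iff_le_add'.mpr (mod_cast G.dist_le_dist_add_one_of_adj i hadj)
  simpa using key
end

section
/- Let G be a simple graph on a finite vertex set V with |V| = N and let i, j ∈ V be distinct. For every (i,j)-feasible flow f for G and every (i,j)-dual-feasible triple (t,u,v) for G, the dual value Σ_{{k,l}∈E} u({k,l}) + t(i) − t(j) is at most the primal value Σ_{k,l∈V} f(k,l). (Weak duality between the paper's primal and dual shortest-path formulations.) -/
/-- `(t, u, v)` is a dual-feasible triple for the simple graph `G`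
(a feasible point of the paper's dual shortest-path LP (15)–(19)), where
`u` and `v` are indexed by unordered pairs `{k,l}` of distinct vertices and
`N - 2 = |V| - 2` is the "big-M" coefficient. -/
def IsDualFeasible {V : Type*} [Fintype V] [DecidableEq V]
    (G : SimpleGraph V) [DecidableRel G.Adj]
    (t : V → ℝ) (u v : Sym2 V → ℝ) : Prop :=
  ∀ k l : V, k ≠ l →
    v s(k, l) + t k - t l ≤ 1 ∧
    v s(k, l) + t l - t k ≤ 1 ∧
    u s(k, l) ≤ v s(k, l) +
      ((Fintype.card V : ℝ) - 2) * (1 - if G.Adj k l then 1 else 0) ∧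
    u s(k, l) ≤ 0 ∧ v s(k, l) ≤ 0

/-- The objective value of the dual triple `(t, u, v)` for the vertex pair
`(i, j)`: `∑_{{k,l}∈E} u {k,l} + t i - t j`, the sum running over all
unordered pairs of distinct vertices. -/
def dualValue {V : Type*} [Fintype V] [DecidableEq V]
    (t : V → ℝ) (u : Sym2 V → ℝ) (i j : V) : ℝ :=
  (∑ e ∈ Finset.univ.filter (fun e : Sym2 V => ¬ e.IsDiag), u e) + t i - t j


/-!
Summing the potential differences `t k - t l` against the flow telescopes, by flow conservation,
to `t i - t j`. Grouping the sum over ordered pairs by unordered pairs `{k,l}`, weak duality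
reduces to one inequality per pair: on an edge, the constraints on `v` bound both directed terms
by `1 - v`, and `u ≤ v ≤ v · (f k l + f l k)` because `v ≤ 0` and the capacity is `1`; on a
non-edge the flow vanishes and `u ≤ 0`.
-/

open Finset

section Pairing

variable {V : Type*} [Fintype V] [DecidableEq V]

lemma sum_sum_eq_sum_offDiag {M : Type*} [AddCommMonoid M] {g : V → V → M}
    (hg : ∀ k, g k k = 0) :
    ∑ k, ∑ l, g k l = ∑ p ∈ univ.offDiag, g p.1 p.2 := by
  rw [← sum_product', ← diag_union_offDiag, sum_union (disjoint_diag_offDiag _)]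
  simp [sum_diag, hg]

lemma offDiag_filter_mk_eq_pair {k l : V} (hkl : k ≠ l) :
    {p ∈ (univ : Finset V).offDiag | s(p.1, p.2) = s(k, l)} = {(k, l), (l, k)} := by
  ext ⟨x, y⟩
  simp only [mem_filter, mem_offDiag, mem_univ, true_and, mem_insert, mem_singleton,
    Prod.mk.injEq, Sym2.eq_iff]
  constructor
  · rintro ⟨-, h⟩
    exact h
  · rintro (⟨rfl, rfl⟩ | ⟨rfl, rfl⟩)
    · exact ⟨hkl, .inl ⟨rfl, rfl⟩⟩
    · exact ⟨hkl.symm, .inr ⟨rfl, rfl⟩⟩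

lemma sum_not_isDiag_add_sum_sum_le {M : Type*} [AddCommMonoid M] [PartialOrder M]
    [IsOrderedAddMonoid M] {c : Sym2 V → M} {g h : V → V → M}
    (hg : ∀ k, g k k = 0) (hh : ∀ k, h k k = 0)
    (hpair : ∀ k l, k ≠ l → c s(k, l) + (g k l + g l k) ≤ h k l + h l k) :
    ∑ e ∈ univ.filter (fun e : Sym2 V => ¬ e.IsDiag), c e + ∑ k, ∑ l, g k l
      ≤ ∑ k, ∑ l, h k l := by
  have hmaps : ∀ p ∈ (univ : Finset V).offDiag,
      s(p.1, p.2) ∈ univ.filter (fun e : Sym2 V => ¬ e.IsDiag) := by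
    intro p hp
    simpa using (mem_offDiag.1 hp).2.2
  rw [sum_sum_eq_sum_offDiag hg, sum_sum_eq_sum_offDiag hh,
    ← sum_fiberwise_of_maps_to hmaps, ← sum_fiberwise_of_maps_to hmaps, ← sum_add_distrib]
  refine sum_le_sum fun e he => ?_
  induction e using Sym2.ind with
  | _ k l =>
    have hkl : k ≠ l := by simpa using he
    have hswap : (k, l) ≠ (l, k) := by simp [hkl]
    rw [offDiag_filter_mk_eq_pair hkl, sum_pair hswap, sum_pair hswap]
    exact hpair k l hkl

end Pairing

lemma sum_sum_mul_sub_eq_sum_mul_netFlow {V R : Type*} [Fintype V] [CommRing R]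
    (f : V → V → R) (t : V → R) :
    ∑ k, ∑ l, f k l * (t k - t l) = ∑ k, t k * (∑ l, f k l - ∑ l, f l k) := by
  simp only [mul_sub, sum_sub_distrib, mul_sum]
  rw [sum_comm (f := fun k l => f k l * t l)]
  simp only [mul_comm]

section Duality

variable {V : Type*} [Fintype V] [DecidableEq V] {G : SimpleGraph V} {i j : V}
  {f : V → V → ℝ}

lemma IsFeasibleFlow.sum_sum_mul_sub_eq (hf : IsFeasibleFlow G i j f) (hij : i ≠ j)
    (t : V → ℝ) : ∑ k, ∑ l, f k l * (t k - t l) = t i - t j := by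
  have hnet : ∀ k, ∑ l, f k l - ∑ l, f l k
      = (if k = i then 1 else 0) - (if k = j then 1 else 0) := by
    intro k
    rw [hf.2.2.2.2 k]
    split_ifs <;> simp_all
  rw [sum_sum_mul_sub_eq_sum_mul_netFlow]
  simp [hnet, mul_sub, sum_sub_distrib]

lemma IsDualFeasible.add_flow_mul_sub_le [DecidableRel G.Adj] {t : V → ℝ} {u v : Sym2 V → ℝ}
    (hd : IsDualFeasible G t u v) (hf : IsFeasibleFlow G i j f) {k l : V} (hkl : k ≠ l) :
    u s(k, l) + (f k l * (t k - t l) + f l k * (t l - t k)) ≤ f k l + f l k := by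
  obtain ⟨hpos, -, hcap, hnadj, -⟩ := hf
  obtain ⟨hv_add_le, hv_sub_le, hu_le, hu_nonpos, hv_nonpos⟩ := hd k l hkl
  by_cases hadj : G.Adj k l
  · simp only [hadj, if_true, sub_self, mul_zero, add_zero] at hu_le
    have hout : f k l * (t k - t l) ≤ f k l * (1 - v s(k, l)) :=
      mul_le_mul_of_nonneg_left (by linarith) (hpos k l)
    have hin : f l k * (t l - t k) ≤ f l k * (1 - v s(k, l)) :=
      mul_le_mul_of_nonneg_left (by linarith) (hpos l k)
    have hv : v s(k, l) ≤ v s(k, l) * (f k l + f l k) := by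
      simpa using mul_le_mul_of_nonpos_left (hcap k l hadj) hv_nonpos
    linarith
  · rw [hnadj k l hkl hadj, hnadj l k hkl.symm (fun h => hadj h.symm)]
    simpa using hu_nonpos

end Duality

/-- **Weak duality between the paper's primal and dual shortest-path
formulations.**  For every `(i,j)`-feasible flow `f` for `G` and every
`(i,j)`-dual-feasible triple `(t,u,v)` for `G`, the dual value
`∑_{{k,l}∈E} u {k,l} + t i - t j` is at most the primal value
`∑_{k,l} f k l`. -/
theorem shortestPath_weak_duality {V : Type*} [Fintype V] [DecidableEq V]
    (G : SimpleGraph V) [DecidableRel G.Adj] (i j : V) (hij : i ≠ j)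
    (f : V → V → ℝ) (t : V → ℝ) (u v : Sym2 V → ℝ)
    (hf : IsFeasibleFlow G i j f) (hd : IsDualFeasible G t u v) :
    dualValue t u i j ≤ ∑ k, ∑ l, f k l := by
  rw [dualValue, add_sub_assoc, ← hf.sum_sum_mul_sub_eq hij t]
  exact sum_not_isDiag_add_sum_sum_le (by simp) hf.2.1
    fun k l hkl => hd.add_flow_mul_sub_le hf hkl
end

section
/- Let G be a simple graph on a finite vertex set V with |V| = N ≥ 2 and let i, j ∈ V be distinct vertices that are reachable from each other in G. Then there exist an (i,j)-feasible flow f for G and an (i,j)-dual-feasible triple (t,u,v) for G whose values are both equal to dist_G(i,j): Σ_{k,l∈V} f(k,l) = Σ_{{k,l}∈E} u({k,l}) + t(i) − t(j) = dist_G(i,j). (The combined primal–dual constraint system encoding shortest paths is feasible whenever i and j lie in the same component.) -/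
/-! A unit flow along a shortest `i`–`j` path has value `dist_G(i,j)`. Dually, the potential
`t k = -dist_G(i,k)` changes by at most `1` along an edge and by at most `N - 1` overall; with
`u = 0` and `v = -(N - 2)(1 - χ)` that is exactly what the dual constraints ask, and the dual value
is `t i - t j = dist_G(i,j)`. -/

open Finset

namespace SimpleGraph

variable {V : Type*} {G : SimpleGraph V}

namespace Walk

variable [DecidableEq V] {u v : V}

def flow (p : G.Walk u v) (k l : V) : ℝ :=
  (p.darts.map Dart.toProd).count (k, l)

@[simp]
lemma flow_nil (k l : V) : (nil : G.Walk u u).flow k l = 0 := by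
  simp [flow]

lemma flow_cons {w : V} (h : G.Adj u w) (p : G.Walk w v) (k l : V) :
    (cons h p).flow k l = p.flow k l + if k = u ∧ l = w then 1 else 0 := by
  simp only [flow, darts_cons, List.map_cons, List.count_cons, beq_iff_eq, Prod.mk.injEq]
  push_cast
  simp only [eq_comm]

lemma flow_nonneg (p : G.Walk u v) (k l : V) : 0 ≤ p.flow k l :=
  Nat.cast_nonneg _

lemma flow_eq_zero_of_not_adj (p : G.Walk u v) {k l : V} (h : ¬G.Adj k l) :
    p.flow k l = 0 := by
  simp only [flow, Nat.cast_eq_zero, List.count_eq_zero, List.mem_map, not_exists, not_and]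
  rintro ⟨⟨a, b⟩, hab⟩ - hd
  cases hd
  exact h hab

lemma mem_support_of_flow_ne_zero (p : G.Walk u v) {k l : V} (h : p.flow k l ≠ 0) :
    k ∈ p.support ∧ l ∈ p.support := by
  obtain ⟨⟨⟨a, b⟩, hab⟩, hd, hkl⟩ :=
    List.mem_map.1 (List.count_pos_iff.1 (Nat.pos_of_ne_zero (Nat.cast_ne_zero.1 h)))
  cases hkl
  exact ⟨p.dart_fst_mem_support_of_mem_darts hd, p.dart_snd_mem_support_of_mem_darts hd⟩

lemma IsPath.flow_add_flow_le_one {p : G.Walk u v} (hp : p.IsPath) (k l : V) :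
    p.flow k l + p.flow l k ≤ 1 := by
  induction p with
  | nil => simp
  | @cons u w v h p ih =>
    rw [cons_isPath_iff] at hp
    have hu : ∀ x, p.flow u x = 0 ∧ p.flow x u = 0 := fun x =>
      ⟨not_not.1 fun hne => hp.2 (p.mem_support_of_flow_ne_zero hne).1,
        not_not.1 fun hne => hp.2 (p.mem_support_of_flow_ne_zero hne).2⟩
    rw [flow_cons, flow_cons]
    by_cases hk : k = u
    · subst hk
      simp [hu, h.ne, ite_le_one]
    by_cases hl : l = u
    · subst hl
      simp [hu, h.ne, hk, ite_le_one]
    simpa [hk, hl] using ih hp.1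

variable [Fintype V]

lemma sum_flow_sub_sum_flow (p : G.Walk u v) (k : V) :
    ∑ l, p.flow k l - ∑ l, p.flow l k = (if k = u then 1 else 0) - (if k = v then 1 else 0) := by
  induction p with
  | nil => simp
  | @cons u w v h p ih =>
    have hout : ∑ l, (if k = u ∧ l = w then (1 : ℝ) else 0) = if k = u then 1 else 0 := by
      split_ifs with hk <;> simp [hk]
    have hin : ∑ l, (if l = u ∧ k = w then (1 : ℝ) else 0) = if k = w then 1 else 0 := by
      simp [ite_and]
    simp only [flow_cons, sum_add_distrib, hout, hin]
    linarith

lemma sum_sum_flow (p : G.Walk u v) : ∑ k, ∑ l, p.flow k l = p.length := by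
  induction p with
  | nil => simp
  | cons h p ih => simp [flow_cons, sum_add_distrib, ih, ite_and]

end Walk

lemma dist_lt_card [Fintype V] (u v : V) : G.dist u v < Fintype.card V := by
  by_cases h : G.Reachable u v
  · obtain ⟨p, hp, hlen⟩ := h.exists_path_of_dist
    exact hlen ▸ hp.length_lt
  · rw [dist_eq_zero_of_not_reachable h]
    exact Fintype.card_pos_iff.2 ⟨u⟩

lemma abs_dist_sub_dist_le_card_sub_one [Fintype V] (i k l : V) :
    |(G.dist i k : ℝ) - G.dist i l| ≤ Fintype.card V - 1 := by
  have hk : (G.dist i k : ℝ) + 1 ≤ Fintype.card V := by exact_mod_cast G.dist_lt_card i k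
  have hl : (G.dist i l : ℝ) + 1 ≤ Fintype.card V := by exact_mod_cast G.dist_lt_card i l
  rw [abs_sub_le_iff]
  constructor <;> linarith [(G.dist i k).cast_nonneg (α := ℝ), (G.dist i l).cast_nonneg (α := ℝ)]

lemma Adj.abs_dist_sub_dist_le_one {k l : V} (h : G.Adj k l) (i : V) :
    |(G.dist i k : ℝ) - G.dist i l| ≤ 1 := by
  have := h.diff_dist_adj (u := i)
  have : G.dist i k ≤ G.dist i l + 1 ∧ G.dist i l ≤ G.dist i k + 1 := by omega
  rw [abs_sub_le_iff, sub_le_iff_le_add', sub_le_iff_le_add']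
  exact_mod_cast this

end SimpleGraph

section

variable {V : Type*} [Fintype V] [DecidableEq V] {G : SimpleGraph V}

lemma SimpleGraph.Walk.IsPath.isFeasibleFlow_flow {i j : V} {p : G.Walk i j} (hp : p.IsPath)
    (hij : i ≠ j) : IsFeasibleFlow G i j p.flow :=
  ⟨p.flow_nonneg, fun _ => p.flow_eq_zero_of_not_adj (G.irrefl),
    fun k l _ => hp.flow_add_flow_le_one k l, fun _ _ _ h => p.flow_eq_zero_of_not_adj h,
    fun k => by rw [p.sum_flow_sub_sum_flow]; split_ifs <;> simp_all⟩

lemma isDualFeasible_of_abs_sub_le [DecidableRel G.Adj] {t : V → ℝ}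
    (hadj : ∀ k l, G.Adj k l → |t k - t l| ≤ 1)
    (hspread : ∀ k l, |t k - t l| ≤ Fintype.card V - 1) :
    IsDualFeasible G t 0 fun e => if e ∈ G.edgeSet then 0 else 2 - Fintype.card V := by
  intro k l hkl
  have hN : (2 : ℝ) ≤ Fintype.card V := by exact_mod_cast Fintype.one_lt_card_iff.2 ⟨k, l, hkl⟩
  simp only [SimpleGraph.mem_edgeSet, Pi.zero_apply]
  split_ifs with h
  · have := abs_sub_le_iff.1 (hadj k l h)
    refine ⟨?_, ?_, ?_, ?_, ?_⟩ <;> linarith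
  · have := abs_sub_le_iff.1 (hspread k l)
    refine ⟨?_, ?_, ?_, ?_, ?_⟩ <;> linarith

lemma exists_isDualFeasible_dualValue_eq_dist (G : SimpleGraph V) [DecidableRel G.Adj]
    (i j : V) : ∃ (t : V → ℝ) (u v : Sym2 V → ℝ),
      IsDualFeasible G t u v ∧ dualValue t u i j = G.dist i j := by
  refine ⟨fun k => -(G.dist i k : ℝ), 0, _, isDualFeasible_of_abs_sub_le ?_ ?_, ?_⟩
  · intro k l h
    rw [neg_sub_neg, abs_sub_comm]
    exact h.abs_dist_sub_dist_le_one i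
  · intro k l
    rw [neg_sub_neg, abs_sub_comm]
    exact G.abs_dist_sub_dist_le_card_sub_one i k l
  · simp [dualValue]

end

theorem shortestPath_primal_dual_feasible_general {V : Type*} [Fintype V] [DecidableEq V]
    (G : SimpleGraph V) [DecidableRel G.Adj]
    (i j : V) (hij : i ≠ j) (hreach : G.Reachable i j) :
    ∃ (f : V → V → ℝ) (t : V → ℝ) (u v : Sym2 V → ℝ),
      IsFeasibleFlow G i j f ∧ IsDualFeasible G t u v ∧
      (∑ k, ∑ l, f k l) = (G.dist i j : ℝ) ∧
      dualValue t u i j = (G.dist i j : ℝ) := by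
  obtain ⟨p, hp, hlen⟩ := hreach.exists_path_of_dist
  obtain ⟨t, u, v, hdual, hval⟩ := exists_isDualFeasible_dualValue_eq_dist G i j
  exact ⟨p.flow, t, u, v, hp.isFeasibleFlow_flow hij, hdual, by rw [p.sum_sum_flow, hlen], hval⟩

/-- **Feasibility of the combined primal–dual shortest-path system.**  If
`|V| = N ≥ 2` and `i ≠ j` are reachable from each other in `G`, then there
exist an `(i,j)`-feasible flow `f` for `G` and an `(i,j)`-dual-feasible
triple `(t,u,v)` for `G` whose values are both equal to the graph distance
`dist_G(i,j)`. -/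
theorem shortestPath_primal_dual_feasible {V : Type*} [Fintype V] [DecidableEq V]
    (G : SimpleGraph V) [DecidableRel G.Adj] (hN : 2 ≤ Fintype.card V)
    (i j : V) (hij : i ≠ j) (hreach : G.Reachable i j) :
    ∃ (f : V → V → ℝ) (t : V → ℝ) (u v : Sym2 V → ℝ),
      IsFeasibleFlow G i j f ∧ IsDualFeasible G t u v ∧
      (∑ k, ∑ l, f k l) = (G.dist i j : ℝ) ∧
      dualValue t u i j = (G.dist i j : ℝ) :=
  shortestPath_primal_dual_feasible_general G i j hij hreach
end

section
/- Let V be a finite set with |V| = N, let p : V → ℝ with bounds p_i^L ≤ p(i) ≤ p_i^U for every i, and set p̂^L = min_{i∈V} p_i^L and p̂^U = max_{i∈V} p_i^U. Let z : V → {0,1} with n = Σ_{i∈V} z(i) ≥ 1, define p'(i) = p(i) if z(i) = 1 and p'(i) = p̂^U if z(i) = 0, and let p̂ ∈ [p̂^L, p̂^U]. Suppose r⁺, r⁻ : V → {0,1} satisfy, for each i ∈ V: (p_i^L − p̂^U)·r⁺(i) ≤ p'(i) − p̂ ≤ (p_i^U − p̂^L)·(1 − r⁺(i)) and (p_i^U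 − p̂^L)·r⁻(i) ≥ p'(i) − p̂ ≥ (p_i^L − p̂^U)·(1 − r⁻(i)), together with n ≤ 2·Σ_{i∈V} r⁺(i) ≤ n + 1 and 2N − n ≤ 2·Σ_{i∈V} r⁻(i) ≤ 2N − n + 1. Then #{i ∈ V : z(i) = 1 and p(i) ≤ p̂} ≥ ⌈n/2⌉ and #{i ∈ V : z(i) = 1 and p(i) ≥ p̂} ≥ ⌈n/2⌉; that is, p̂ is a median of the multiset of values {p(i) : z(i) = 1}. -/
lemma sum_indicator_eq_card {V : Type*} [Fintype V] [DecidableEq V]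
    (f : V → ℝ) (h01 : ∀ i, f i = 0 ∨ f i = 1) :
    ∑ i, f i = ((Finset.univ.filter (fun i => f i = 1)).card : ℝ) := by
  classical
  rw [← Finset.sum_boole]
  apply Finset.sum_congr rfl
  intro i _
  rcases h01 i with h | h <;> simp [h]


/-- **Correctness of the median-specification constraints (32)–(35) of the
paper.**  Let `V` be a finite set with `|V| = N`, `p : V → ℝ` a property with
per-node bounds `pL i ≤ p i ≤ pU i`, `p̂^L = min_i pL i`, `p̂^U = max_i pU i`,
and `z : V → {0,1}` a subset indicator with `n = ∑ z i ≥ 1` active nodes.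
Let `p' i = p i` if `z i = 1` and `p' i = p̂^U` otherwise, and let
`p̂ ∈ [p̂^L, p̂^U]` be a candidate median.  If binary variables
`r⁺, r⁻ : V → {0,1}` satisfy the big-M constraints (32)–(33)
`(pL i − p̂^U) r⁺ i ≤ p' i − p̂ ≤ (pU i − p̂^L)(1 − r⁺ i)` and
`(pU i − p̂^L) r⁻ i ≥ p' i − p̂ ≥ (pL i − p̂^U)(1 − r⁻ i)`,
together with the counting constraints (34)–(35)
`n ≤ 2 ∑ r⁺ i ≤ n + 1` and `2N − n ≤ 2 ∑ r⁻ i ≤ 2N − n + 1`,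
then at least `⌈n/2⌉ = (n+1)/2` of the active values satisfy `p i ≤ p̂` and
at least `⌈n/2⌉` satisfy `p i ≥ p̂`; that is, `p̂` is a median of the values
`{p i : z i = 1}`. -/
theorem median_specification_correct {V : Type*} [Fintype V] [Nonempty V]
    (N : ℕ) (hN : Fintype.card V = N)
    (p pL pU : V → ℝ) (hb : ∀ i, pL i ≤ p i ∧ p i ≤ pU i)
    (phatL phatU : ℝ)
    (hphatL : phatL = Finset.univ.inf' Finset.univ_nonempty pL)
    (hphatU : phatU = Finset.univ.sup' Finset.univ_nonempty pU)
    (z : V → ℝ) (hz : ∀ i, z i = 0 ∨ z i = 1)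
    (n : ℕ) (hn : (n : ℝ) = ∑ i, z i) (hn1 : 1 ≤ n)
    (p' : V → ℝ) (hp' : ∀ i, p' i = if z i = 1 then p i else phatU)
    (phat : ℝ) (hphat : phatL ≤ phat ∧ phat ≤ phatU)
    (rp rm : V → ℝ)
    (hrp01 : ∀ i, rp i = 0 ∨ rp i = 1) (hrm01 : ∀ i, rm i = 0 ∨ rm i = 1)
    (hrp : ∀ i, (pL i - phatU) * rp i ≤ p' i - phat ∧
                p' i - phat ≤ (pU i - phatL) * (1 - rp i))
    (hrm : ∀ i, (pL i - phatU) * (1 - rm i) ≤ p' i - phat ∧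
                p' i - phat ≤ (pU i - phatL) * rm i)
    (hcp : (n : ℝ) ≤ 2 * ∑ i, rp i ∧ 2 * ∑ i, rp i ≤ (n : ℝ) + 1)
    (hcm : 2 * (N : ℝ) - n ≤ 2 * ∑ i, rm i ∧
           2 * ∑ i, rm i ≤ 2 * (N : ℝ) - n + 1) :
    (n + 1) / 2 ≤ {i : V | z i = 1 ∧ p i ≤ phat}.ncard ∧
    (n + 1) / 2 ≤ {i : V | z i = 1 ∧ phat ≤ p i}.ncard := by
  classical
  -- basic sets
  set A : Finset V := Finset.univ.filter (fun i => z i = 1) with hA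
  set Sp : Finset V := Finset.univ.filter (fun i => rp i = 1) with hSp
  set Sm : Finset V := Finset.univ.filter (fun i => rm i = 1) with hSm
  -- card A = n
  have hcardA : A.card = n := by
    have := sum_indicator_eq_card z hz
    rw [← hn] at this
    exact_mod_cast this.symm
  -- sums = cards
  have hsumP : ∑ i, rp i = (Sp.card : ℝ) := sum_indicator_eq_card rp hrp01
  have hsumM : ∑ i, rm i = (Sm.card : ℝ) := sum_indicator_eq_card rm hrm01
  -- counting bounds in ℕ
  have hnp : n ≤ 2 * Sp.card := by
    have := hcp.1
    rw [hsumP] at this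
    exact_mod_cast this
  have hnm : 2 * N ≤ 2 * Sm.card + n := by
    have := hcm.1
    rw [hsumM] at this
    have : 2 * (N : ℝ) ≤ 2 * (Sm.card : ℝ) + n := by linarith
    exact_mod_cast this
  -- members of Sp have p' i ≤ phat
  have hSp_le : ∀ i ∈ Sp, p' i ≤ phat := by
    intro i hi
    rw [hSp, Finset.mem_filter] at hi
    have h2 := (hrp i).2
    rw [hi.2] at h2
    simpa using by linarith [h2]
  -- members of Sm have phat ≤ p' i
  have hSm_ge : ∀ i ∈ Sm, phat ≤ p' i := by
    intro i hi
    rw [hSm, Finset.mem_filter] at hi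
    have h1 := (hrm i).1
    rw [hi.2] at h1
    simpa using by linarith [h1]
  -- ncard identification with filters
  have hnc1 : {i : V | z i = 1 ∧ p i ≤ phat}.ncard
      = (Finset.univ.filter (fun i => z i = 1 ∧ p i ≤ phat)).card := by
    rw [← Set.ncard_coe_finset]
    congr 1
    ext i; simp
  have hnc2 : {i : V | z i = 1 ∧ phat ≤ p i}.ncard
      = (Finset.univ.filter (fun i => z i = 1 ∧ phat ≤ p i)).card := by
    rw [← Set.ncard_coe_finset]
    congr 1
    ext i; simp
  constructor
  · -- first goal
    rw [hnc1]
    by_cases hcase : ∀ i ∈ Sp, z i = 1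
    · -- Sp ⊆ filter
      have hsub : Sp ⊆ Finset.univ.filter (fun i => z i = 1 ∧ p i ≤ phat) := by
        intro i hi
        have hz1 := hcase i hi
        have hle := hSp_le i hi
        rw [hp' i, if_pos hz1] at hle
        simp [hz1, hle]
      have := Finset.card_le_card hsub
      omega
    · -- some non-member in Sp forces phat = phatU
      push_neg at hcase
      obtain ⟨i, hiSp, hiz⟩ := hcase
      have hle := hSp_le i hiSp
      rw [hp' i, if_neg hiz] at hle
      have hphatU_eq : phat = phatU := le_antisymm hphat.2 hle
      -- all actives satisfy p ≤ phat
      have hsub : A ⊆ Finset.univ.filter (fun i => z i = 1 ∧ p i ≤ phat) := by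
        intro j hj
        rw [hA, Finset.mem_filter] at hj
        have : p j ≤ phatU := le_trans (hb j).2 (by
          rw [hphatU]; exact Finset.le_sup' pU (Finset.mem_univ j))
        simp [hj.2, hphatU_eq, this]
      have := Finset.card_le_card hsub
      omega
  · -- second goal
    rw [hnc2]
    have hsub : Sm ∩ A ⊆ Finset.univ.filter (fun i => z i = 1 ∧ phat ≤ p i) := by
      intro i hi
      rw [Finset.mem_inter] at hi
      have hz1 : z i = 1 := by
        have := hi.2; rw [hA, Finset.mem_filter] at this; exact this.2
      have hge := hSm_ge i hi.1
      rw [hp' i, if_pos hz1] at hge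
      simp [hz1, hge]
    have hcard_sub := Finset.card_le_card hsub
    have hie : (Sm ∩ A).card + (Sm ∪ A).card = Sm.card + A.card :=
      Finset.card_inter_add_card_union Sm A
    have hle : (Sm ∪ A).card ≤ N := by
      rw [← hN]
      exact Finset.card_le_univ _
    omega
end

section
/- Let V be a finite set, M a positive integer, p : V → ℝ with bounds p_i^L ≤ p(i) ≤ p_i^U for every i ∈ V, let z : V → {0,1} with Σ_{i∈V} z(i) = M, and let ranges [π_m^L, π_m^U] for m = 1,…,M be given. Then there exists q : V × {1,…,M} → {0,1} satisfying: p(i) ≥ p_i^L − (p_i^L − π_m^L)·q(i,m) and p(i) ≤ p_i^U − (p_i^U − π_m^U)·q(i,m) for all i, m; Σ_{i∈V} q(i,m) = 1 for every m; and Σ_{m=1}^{M} q(i,m) = z(i) for every i; if and only if there exists a bijection σ from {1,…,M} onto the set {i ∈ V : z(i) = 1} such that π_m^L ≤ p(σ(m)) ≤ π_m^U for every m. -/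
/-- **Correctness of the sequence-specification constraints (25)–(28) of the
paper.**  Let `V` be a finite set, `M > 0`, `p : V → ℝ` a property with
per-node bounds `pL i ≤ p i ≤ pU i`, `z : V → {0,1}` a subset indicator with
`∑ z i = M`, and ranges `[πL m, πU m]`, `m = 1,…,M`.  Then binary assignment
variables `q : V × {1,…,M} → {0,1}` satisfying
`p i ≥ pL i − (pL i − πL m)·q i m`, `p i ≤ pU i − (pU i − πU m)·q i m`,
`∑_i q i m = 1` for each `m`, and `∑_m q i m = z i` for each `i`,
exist if and only if there is a bijection `σ` from `{1,…,M}` onto the subset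
`{i : z i = 1}` with `πL m ≤ p (σ m) ≤ πU m` for every `m`. -/
theorem sequence_specification_correct {V : Type*} [Fintype V]
    (M : ℕ) (hM : 0 < M)
    (p pL pU : V → ℝ) (hb : ∀ i, pL i ≤ p i ∧ p i ≤ pU i)
    (z : V → ℝ) (hz : ∀ i, z i = 0 ∨ z i = 1)
    (hzsum : ∑ i, z i = (M : ℝ))
    (πL πU : Fin M → ℝ) :
    (∃ q : V → Fin M → ℝ,
      (∀ i m, q i m = 0 ∨ q i m = 1) ∧
      (∀ i m, pL i - (pL i - πL m) * q i m ≤ p i ∧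
              p i ≤ pU i - (pU i - πU m) * q i m) ∧
      (∀ m, ∑ i, q i m = 1) ∧
      (∀ i, ∑ m, q i m = z i)) ↔
    (∃ σ : Fin M → V, Function.Injective σ ∧
      (∀ i, z i = 1 ↔ ∃ m, σ m = i) ∧
      (∀ m, πL m ≤ p (σ m) ∧ p (σ m) ≤ πU m)) := by
  classical
  constructor
  · rintro ⟨q, hbin, hcons, hcol, hrow⟩
    have hq0 : ∀ i m, 0 ≤ q i m := by
      intro i m; rcases hbin i m with h | h <;> simp [h]
    -- each column has some 1
    have hex : ∀ m : Fin M, ∃ i, q i m = 1 := by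
      intro m
      by_contra h
      push_neg at h
      have h0 : ∀ i, q i m = 0 := fun i => (hbin i m).resolve_right (h i)
      have h1 := hcol m
      rw [Finset.sum_congr rfl (fun i _ => h0 i)] at h1
      simp at h1
    choose σ hσ using hex
    -- uniqueness in a column
    have huniq : ∀ (i : V) (m : Fin M), q i m = 1 → i = σ m := by
      intro i m hi
      by_contra hne
      have hsub : ({i, σ m} : Finset V) ⊆ Finset.univ := Finset.subset_univ _
      have h2 : (2 : ℝ) ≤ ∑ j, q j m := by
        calc (2 : ℝ) = ∑ j ∈ ({i, σ m} : Finset V), q j m := by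
              rw [Finset.sum_pair hne, hi, hσ m]; norm_num
          _ ≤ ∑ j, q j m :=
              Finset.sum_le_sum_of_subset_of_nonneg hsub (fun j _ _ => hq0 j m)
      rw [hcol m] at h2; linarith
    have hinj : Function.Injective σ := by
      intro m m' h
      by_contra hne
      have h2 : (2 : ℝ) ≤ ∑ k, q (σ m) k := by
        calc (2 : ℝ) = ∑ k ∈ ({m, m'} : Finset (Fin M)), q (σ m) k := by
              rw [Finset.sum_pair hne, hσ m, h, hσ m']; norm_num
          _ ≤ ∑ k, q (σ m) k :=
              Finset.sum_le_sum_of_subset_of_nonneg (Finset.subset_univ _)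
                (fun k _ _ => hq0 _ k)
      rw [hrow (σ m)] at h2
      rcases hz (σ m) with h0 | h1 <;> linarith
    refine ⟨σ, hinj, ?_, ?_⟩
    · intro i
      constructor
      · intro hzi
        have hpos : 0 < ∑ m, q i m := by rw [hrow i, hzi]; norm_num
        obtain ⟨m, -, hm⟩ := Finset.exists_lt_of_sum_lt (by simpa using hpos :
          ∑ _m : Fin M, (0:ℝ) < ∑ m, q i m)
        have : q i m = 1 := (hbin i m).resolve_left (by linarith)
        exact ⟨m, (huniq i m this).symm⟩
      · rintro ⟨m, rfl⟩
        have h1 : (1 : ℝ) ≤ ∑ k, q (σ m) k := by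
          calc (1 : ℝ) = ∑ k ∈ ({m} : Finset (Fin M)), q (σ m) k := by
                simp [hσ m]
            _ ≤ ∑ k, q (σ m) k :=
                Finset.sum_le_sum_of_subset_of_nonneg (Finset.subset_univ _)
                  (fun k _ _ => hq0 _ k)
        rw [hrow (σ m)] at h1
        rcases hz (σ m) with h0 | h1' <;> [linarith; exact h1']
    · intro m
      have h := hcons (σ m) m
      rw [hσ m] at h
      constructor <;> [nlinarith [h.1]; nlinarith [h.2]]
  · rintro ⟨σ, hinj, hmem, hbounds⟩
    refine ⟨fun i m => if σ m = i then 1 else 0, ?_, ?_, ?_, ?_⟩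
    · intro i m; by_cases h : σ m = i <;> simp [h]
    · intro i m
      by_cases h : σ m = i
      · subst h; simp; constructor <;> [linarith [(hbounds m).1]; linarith [(hbounds m).2]]
      · simp [h]; exact hb i
    · intro m
      simp [Finset.sum_ite_eq]
    · intro i
      rcases hz i with h0 | h1
      · rw [h0]
        apply Finset.sum_eq_zero
        intro m _
        have : σ m ≠ i := fun h => by
          have := (hmem i).2 ⟨m, h⟩; rw [h0] at this; norm_num at this
        simp [this]
      · rw [h1]
        obtain ⟨m0, hm0⟩ := (hmem i).1 h1
        rw [Finset.sum_eq_single_of_mem m0 (Finset.mem_univ _)]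
        · simp [hm0]
        · intro m _ hne
          have : σ m ≠ i := fun h => hne (hinj (h.trans hm0.symm))
          simp [this]
end

section
/- Let E be a nonempty finite index set, let w : E → ℝ with w(e) ≥ 1 for all e, and let D^L, D^U ∈ ℝ with 1 ≤ D^L ≤ D^U. Then there exists ψ : E → {0,1} with Σ_{e∈E} ψ(e) ≥ 1 and 1 + (D^L − 1)·ψ(e) ≤ w(e) ≤ D^U for every e ∈ E, if and only if w(e) ≤ D^U for every e ∈ E and w(e) ≥ D^L for at least one e ∈ E; that is, if and only if max_{e∈E} w(e) ∈ [D^L, D^U]. -/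
/-- **Correctness of the diameter-specification constraints (54)–(55) of the
paper (with zero slacks).**  Let `E` be a nonempty finite index set of vertex
pairs, `w e ≥ 1` the shortest-path length of pair `e`, and `1 ≤ D^L ≤ D^U`.
Then there exist binary variables `ψ : E → {0,1}` with `∑_{e∈E} ψ e ≥ 1` and
`1 + (D^L − 1)·ψ e ≤ w e ≤ D^U` for every `e ∈ E`, if and only if
`w e ≤ D^U` for every `e ∈ E` and `D^L ≤ w e` for at least one `e ∈ E`;
that is, iff the diameter `max_{e∈E} w e` lies in `[D^L, D^U]`. -/
theorem diameter_specification_correct {ι : Type*} (E : Finset ι)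
    (hE : E.Nonempty) (w : ι → ℝ) (hw : ∀ e ∈ E, 1 ≤ w e)
    (DL DU : ℝ) (hDL : 1 ≤ DL) (hDLU : DL ≤ DU) :
    (∃ ψ : ι → ℝ, (∀ e ∈ E, ψ e = 0 ∨ ψ e = 1) ∧
      1 ≤ ∑ e ∈ E, ψ e ∧
      (∀ e ∈ E, 1 + (DL - 1) * ψ e ≤ w e ∧ w e ≤ DU)) ↔
    ((∀ e ∈ E, w e ≤ DU) ∧ ∃ e ∈ E, DL ≤ w e) := by
  classical
  constructor
  · rintro ⟨ψ, hbin, hsum, hineq⟩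
    refine ⟨fun e he => (hineq e he).2, ?_⟩
    by_contra h
    push_neg at h
    have hzero : ∀ e ∈ E, ψ e = 0 := by
      intro e he
      rcases hbin e he with h0 | h1
      · exact h0
      · exfalso
        have := (hineq e he).1
        rw [h1, mul_one] at this
        linarith [h e he]
    have : ∑ e ∈ E, ψ e = 0 := Finset.sum_eq_zero hzero
    linarith
  · rintro ⟨hub, e0, he0, hlb⟩
    refine ⟨fun e => if e = e0 then 1 else 0, ?_, ?_, ?_⟩
    · intro e _; by_cases h : e = e0 <;> simp [h]
    · rw [Finset.sum_ite_eq' E e0 (fun _ => (1:ℝ))]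
      simp [he0]
    · intro e he
      refine ⟨?_, hub e he⟩
      by_cases h : e = e0
      · subst h; simp; linarith
      · simp [h]; linarith [hw e he]
end

section
/- Let N ≥ 2, let p : {1,…,N} → ℤ satisfy p(i) ≥ p(i+1) for all i < N, and let pp : {1,…,N} → ℝ with bounds pp_i^L ≤ pp(i) ≤ pp_i^U for each i, where pp_i^L ≤ pp_{i+1}^U for each i < N. For each i < N set U_i = pp_{i+1}^U − pp_i^L. Then for each i < N, the inequality U_i·(p(i) − p(i+1)) + pp(i) − pp(i+1) ≥ 0 holds if and only if p(i) = p(i+1) implies pp(i) ≥ pp(i+1). In particular, given that p is non-increasing and integer-valued, the big-M constraints with coefficient U_i are satisfied exactly by those assignments in which the secondary property pp is non-increasing within each block of ties of the primary property p. -/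
/-- **Correctness of the secondary symmetry-breaking constraint (62) of the
paper with big-M coefficient `U_i = pp_{i+1}^U − pp_i^L`.**  Let
`p : {1,…,N} → ℤ` be a non-increasing integer-valued primary property (e.g.
the degrees, sorted by constraint (61)) and `pp` a real-valued secondary
property with bounds `ppL i ≤ pp i ≤ ppU i`, where `ppL i ≤ ppU (i+1)` for
consecutive indices.  Then for consecutive indices `i, i+1`, the big-M
inequality `U_i (p i − p (i+1)) + pp i − pp (i+1) ≥ 0` holds if and only if
`p i = p (i+1)` implies `pp i ≥ pp (i+1)`: the constraint is satisfied
exactly by assignments in which `pp` is non-increasing within each block of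
ties of `p`. -/
theorem secondary_symmetry_breaking_correct (N : ℕ) (hN : 2 ≤ N)
    (p : Fin N → ℤ)
    (hsort : ∀ i j : Fin N, (j : ℕ) = (i : ℕ) + 1 → p j ≤ p i)
    (pp ppL ppU : Fin N → ℝ)
    (hbnd : ∀ i, ppL i ≤ pp i ∧ pp i ≤ ppU i)
    (hLU : ∀ i j : Fin N, (j : ℕ) = (i : ℕ) + 1 → ppL i ≤ ppU j) :
    ∀ i j : Fin N, (j : ℕ) = (i : ℕ) + 1 →
      (0 ≤ (ppU j - ppL i) * ((p i : ℝ) - (p j : ℝ)) + pp i - pp j ↔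
        (p i = p j → pp j ≤ pp i)) := by
  intro i j hij
  have hle := hsort i j hij
  have hU : (0:ℝ) ≤ ppU j - ppL i := by linarith [hLU i j hij]
  constructor
  · intro h heq
    rw [heq] at h
    simp at h
    linarith
  · intro h
    rcases eq_or_lt_of_le hle with heq | hlt
    · have := h heq.symm
      rw [heq.symm]
      simp
      linarith
    · have hd : (1:ℝ) ≤ (p i : ℝ) - (p j : ℝ) := by
        have h1 : p j + 1 ≤ p i := hlt
        have h2 := (Int.cast_le (R := ℝ)).mpr h1
        push_cast at h2
        linarith
      have h1 := (hbnd i).1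
      have h2 := (hbnd j).2
      nlinarith
end
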